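/- Let M be a matroid, B a base of M, e₀ and e₁ distinct elements of E \ B, and f an element of C_M(e₀,B) ∩ C_M(e₁,B). Let B' := (B ∪ {e₀}) \ {f}. Then B' is a base of M and C_M(e₀,B) △ C_M(e₁,B) ⊆ C_M(e₁,B') ⊆ (C_M(e₀,B) ∪ C_M(e₁,B)) \ {f}. -/

import Mathlib

open Set

variable {α : Type*}

/-- `C` is a circuit of the matroid `M`: a minimal dependent subset of the ground set. -/
def MCircuit (M : Matroid α) (C : Set α) : Prop :=
  C ⊆ M.E ∧ ¬ M.Indep C ∧ ∀ D, D ⊂ C → M.Indep D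

/-- `C` is the fundamental circuit of `e` with respect to `B`. -/
def FundCircuit (M : Matroid α) (e : α) (B C : Set α) : Prop :=
  MCircuit M C ∧ e ∈ C ∧ C ⊆ insert e B

/-! Everything follows from strong circuit elimination and the fact that `M.fundCircuit e I` is
the only circuit inside `insert e I` when `I` is independent. Eliminating `f` from `C₁` and `C₀`
while keeping some `g ∈ C₁ \ C₀` gives a circuit inside `insert e₁ B'`, hence `C₁'` itself: this
yields the upper bound and `C₁ \ C₀ ⊆ C₁'`. Then `e₀ ∈ C₁'`, for otherwise `C₁' = C₁ ∋ f`, and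
eliminating `e₀` from `C₀` and `C₁'` while keeping some `g ∈ C₀ \ C₁'` gives a circuit inside
`insert e₁ B`, i.e. `C₁`, so `C₀ \ C₁ ⊆ C₁'`. -/

section

variable {M : Matroid α} {e : α} {B I C : Set α}

lemma mcircuit_iff_isCircuit : MCircuit M C ↔ M.IsCircuit C := by
  rw [Matroid.isCircuit_iff_forall_ssubset, MCircuit, Matroid.dep_iff]
  tauto

lemma FundCircuit.isCircuit (h : FundCircuit M e I C) : M.IsCircuit C :=
  mcircuit_iff_isCircuit.1 h.1

lemma FundCircuit.eq_fundCircuit (h : FundCircuit M e I C) (hI : M.Indep I) :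
    C = M.fundCircuit e I :=
  h.isCircuit.eq_fundCircuit_of_subset hI h.2.2

lemma FundCircuit.of_isBase (hB : M.IsBase B) (he : e ∈ M.E \ B) :
    FundCircuit M e B (M.fundCircuit e B) :=
  ⟨mcircuit_iff_isCircuit.2 (hB.fundCircuit_isCircuit he.1 he.2), M.mem_fundCircuit e B,
    M.fundCircuit_subset_insert e B⟩

lemma Matroid.IsBase.exchange_isBase_of_mem_fundCircuit {f : α} (hB : M.IsBase B)
    (he : e ∈ M.E \ B) (hf : f ∈ M.fundCircuit e B) : M.IsBase (insert e B \ {f}) := by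
  obtain rfl | hfe := eq_or_ne f e
  · rwa [insert_sdiff_self_of_notMem he.2]
  have hfB : f ∈ B := (M.fundCircuit_subset_insert e B hf).resolve_left hfe
  refine hB.exchange_isBase_of_indep' hfB he.2 ?_
  exact (hB.indep.mem_fundCircuit_iff (by rw [hB.closure_eq]; exact he.1) he.2).1 hf

lemma Matroid.IsCircuit.strong_elimination_fundCircuit {C₁ C₂ : Set α} {f x : α}
    (hC₁ : M.IsCircuit C₁) (hC₂ : M.IsCircuit C₂) (heC₁ : e ∈ C₁) (heC₂ : e ∈ C₂)
    (hfC₁ : f ∈ C₁) (hfC₂ : f ∉ C₂) (hI : M.Indep I) (hsub : (C₁ ∪ C₂) \ {e} ⊆ insert x I) :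
    f ∈ M.fundCircuit x I ∧ M.fundCircuit x I ⊆ (C₁ ∪ C₂) \ {e} := by
  obtain ⟨C, hCs, hC, hfC⟩ := hC₁.strong_elimination hC₂ heC₁ heC₂ hfC₁ hfC₂
  obtain rfl := hC.eq_fundCircuit_of_subset hI (hCs.trans hsub)
  exact ⟨hfC, hCs⟩

end

/-- Base exchange: with `B' := (B ∪ {e₀}) \ {f}` for `f ∈ C_M(e₀,B) ∩ C_M(e₁,B)`, `B'` is a
base and `C_M(e₀,B) △ C_M(e₁,B) ⊆ C_M(e₁,B') ⊆ (C_M(e₀,B) ∪ C_M(e₁,B)) \ {f}`. -/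
theorem stmt5 (M : Matroid α) (B : Set α) (hB : M.IsBase B)
    (e₀ e₁ : α) (he₀ : e₀ ∈ M.E \ B) (he₁ : e₁ ∈ M.E \ B) (hne : e₀ ≠ e₁)
    (C₀ C₁ : Set α) (hC₀ : FundCircuit M e₀ B C₀) (hC₁ : FundCircuit M e₁ B C₁)
    (f : α) (hf : f ∈ C₀ ∩ C₁) :
    M.IsBase (insert e₀ B \ {f}) ∧
      ∃ C₁', FundCircuit M e₁ (insert e₀ B \ {f}) C₁' ∧
        (C₀ \ C₁) ∪ (C₁ \ C₀) ⊆ C₁' ∧ C₁' ⊆ (C₀ ∪ C₁) \ {f} := by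
  have he₁C₀ : e₁ ∉ C₀ := fun h ↦ by grind [hC₀.2.2 h]
  set B' := insert e₀ B \ {f}
  have hB' : M.IsBase B' :=
    hB.exchange_isBase_of_mem_fundCircuit he₀ (hC₀.eq_fundCircuit hB.indep ▸ hf.1)
  have hC₁' := FundCircuit.of_isBase hB' ⟨he₁.1, by grind⟩
  set C₁' := M.fundCircuit e₁ B'
  have hsub : (C₁ ∪ C₀) \ {f} ⊆ insert e₁ B' := fun x hx ↦ by grind [hC₀.2.2, hC₁.2.2]
  have helim : ∀ g ∈ C₁ \ C₀, g ∈ C₁' ∧ C₁' ⊆ (C₁ ∪ C₀) \ {f} := fun g hg ↦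
    hC₁.isCircuit.strong_elimination_fundCircuit hC₀.isCircuit hf.2 hf.1 hg.1 hg.2 hB'.indep hsub
  have hupper : C₁' ⊆ (C₀ ∪ C₁) \ {f} := union_comm C₀ C₁ ▸ (helim e₁ ⟨hC₁.2.1, he₁C₀⟩).2
  have he₀C₁' : e₀ ∈ C₁' := by
    by_contra h
    have hC₁'B : C₁' ⊆ insert e₁ B := fun x hx ↦ by grind [hC₁'.2.2 hx]
    have hC₁'C₁ : C₁' = C₁ := (hC₁'.isCircuit.eq_fundCircuit_of_subset hB.indep hC₁'B).trans
      (hC₁.eq_fundCircuit hB.indep).symm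
    exact (hupper (hC₁'C₁ ▸ hf.2)).2 rfl
  refine ⟨hB', C₁', hC₁', ?_, hupper⟩
  rintro g (⟨hg₀, hg₁⟩ | hg)
  · by_contra hgC₁'
    have hsub' : (C₀ ∪ C₁') \ {e₀} ⊆ insert e₁ B := fun x hx ↦ by grind [hC₀.2.2, hC₁'.2.2]
    refine hg₁ (hC₁.eq_fundCircuit hB.indep ▸ ?_)
    exact (hC₀.isCircuit.strong_elimination_fundCircuit hC₁'.isCircuit hC₀.2.1 he₀C₁' hg₀ hgC₁'
      hB.indep hsub').1
  · exact (helim g hg).1
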